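/- Let X be a Banach lattice, E a Banach space, and Y a Banach sequence lattice. Every absolutely Y-summing operator S : X → E is Y-concave, and its Y-concavity constant satisfies ‖S‖_{K_Y} ≤ ‖S‖_{Π_Y}. -/

import Mathlib

open Filter Topology

/-- `h : ℝⁿ → ℝ` is positively homogeneous of degree 1. -/
def PosHomog {n : ℕ} (h : (Fin n → ℝ) → ℝ) : Prop :=
  ∀ l : ℝ, 0 ≤ l → ∀ t, h (l • t) = l * h t

/-- Membership in `H_n`: continuous and positively homogeneous of degree 1. -/
def InHn {n : ℕ} (h : (Fin n → ℝ) → ℝ) : Prop := Continuous h ∧ PosHomog h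

/-- The norm of `H_n`: supremum of `|h|` over the unit sphere of the sup norm on `ℝⁿ`. -/
noncomputable def HnNorm {n : ℕ} (h : (Fin n → ℝ) → ℝ) : ℝ :=
  ⨆ t : {t : Fin n → ℝ // ‖t‖ = 1}, |h t.1|

/-- `τ` is the Krivine functional calculus operator associated to `x ∈ Xⁿ`:
a linear map on `H_n` preserving finite suprema sending the `j`-th coordinate
projection to `x j`. -/
def IsKrivine {X : Type*} [NormedAddCommGroup X] [Lattice X] [HasSolidNorm X] [IsOrderedAddMonoid X] [NormedSpace ℝ X]
    {n : ℕ} (x : Fin n → X) (τ : ((Fin n → ℝ) → ℝ) → X) : Prop :=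
  (∀ h g, InHn h → InHn g → τ (h + g) = τ h + τ g) ∧
  (∀ (c : ℝ) h, InHn h → τ (c • h) = c • τ h) ∧
  (∀ h g, InHn h → InHn g → τ (h ⊔ g) = τ h ⊔ τ g) ∧
  (∀ j, τ (fun t => t j) = x j)

/-- The data of a Banach sequence lattice `Y`, recorded through the restrictions
`N n = ‖·‖_{ℝⁿ,Y}` of its norm to the finitely supported sequences `ℝⁿ`:
each `N n` is a (continuous) lattice norm on `ℝⁿ` and the family is consistent. -/
structure SeqLatticeNorm where
  N : ∀ n, (Fin n → ℝ) → ℝ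
  cont : ∀ n, Continuous (N n)
  add_le : ∀ n (a b : Fin n → ℝ), N n (a + b) ≤ N n a + N n b
  smul_eq : ∀ n (c : ℝ) (a : Fin n → ℝ), N n (c • a) = |c| * N n a
  eq_zero : ∀ n (a : Fin n → ℝ), N n a = 0 → a = 0
  mono : ∀ n (a b : Fin n → ℝ), (∀ j, |a j| ≤ |b j|) → N n a ≤ N n b
  consistent : ∀ n (a : Fin n → ℝ), N (n + 1) (Fin.snoc a 0) = N n a

/-- `T : E → X` is `Y`-convex with constant `C`:
`‖ ‖(Tw₁,...,Twₙ)‖_Y ‖_X ≤ C ‖(‖w₁‖,...,‖wₙ‖)‖_Y` for all finite tuples. -/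
def YConvexWith {E X : Type*} [NormedAddCommGroup E] [NormedSpace ℝ E]
    [NormedAddCommGroup X] [Lattice X] [HasSolidNorm X] [IsOrderedAddMonoid X] [NormedSpace ℝ X]
    (s : SeqLatticeNorm) (T : E → X) (C : ℝ) : Prop :=
  ∀ (n : ℕ) (w : Fin n → E) (τ : ((Fin n → ℝ) → ℝ) → X),
    IsKrivine (fun j => T (w j)) τ → ‖τ (s.N n)‖ ≤ C * s.N n fun j => ‖w j‖

/-- The `Y`-convexity constant `M^Y(T)`. -/
noncomputable def YConvexConst {E X : Type*} [NormedAddCommGroup E] [NormedSpace ℝ E]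
    [NormedAddCommGroup X] [Lattice X] [HasSolidNorm X] [IsOrderedAddMonoid X] [NormedSpace ℝ X]
    (s : SeqLatticeNorm) (T : E → X) : ℝ :=
  sInf {C : ℝ | 0 ≤ C ∧ YConvexWith s T C}

/-- `S : X → E` is `Y`-concave with constant `K`:
`‖(‖Sx₁‖,...,‖Sxₙ‖)‖_Y ≤ K ‖ ‖(x₁,...,xₙ)‖_Y ‖_X` for all finite tuples. -/
def YConcaveWith {E X : Type*} [NormedAddCommGroup E] [NormedSpace ℝ E]
    [NormedAddCommGroup X] [Lattice X] [HasSolidNorm X] [IsOrderedAddMonoid X] [NormedSpace ℝ X]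
    (s : SeqLatticeNorm) (S : X → E) (K : ℝ) : Prop :=
  ∀ (n : ℕ) (x : Fin n → X) (τ : ((Fin n → ℝ) → ℝ) → X),
    IsKrivine x τ → s.N n (fun j => ‖S (x j)‖) ≤ K * ‖τ (s.N n)‖

/-- The `Y`-concavity constant `M_Y(S)`. -/
noncomputable def YConcaveConst {E X : Type*} [NormedAddCommGroup E] [NormedSpace ℝ E]
    [NormedAddCommGroup X] [Lattice X] [HasSolidNorm X] [IsOrderedAddMonoid X] [NormedSpace ℝ X]
    (s : SeqLatticeNorm) (S : X → E) : ℝ :=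
  sInf {K : ℝ | 0 ≤ K ∧ YConcaveWith s S K}

/-- `S : X → E` is absolutely `Y`-summing with constant `C`:
`‖(‖Sx₁‖,...,‖Sxₙ‖)‖_Y ≤ C · sup_{x* ∈ B_{X*}} ‖(⟨x₁,x*⟩,...,⟨xₙ,x*⟩)‖_Y`. -/
def YSummingWith {E X : Type*} [NormedAddCommGroup E] [NormedSpace ℝ E]
    [NormedAddCommGroup X] [NormedSpace ℝ X]
    (s : SeqLatticeNorm) (S : X → E) (C : ℝ) : Prop :=
  ∀ (n : ℕ) (x : Fin n → X),
    s.N n (fun j => ‖S (x j)‖) ≤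
      C * sSup {r : ℝ | ∃ φ : X →L[ℝ] ℝ, ‖φ‖ ≤ 1 ∧ r = s.N n fun j => φ (x j)}

/-- The absolutely `Y`-summing norm `‖S‖_{Π_Y}`. -/
noncomputable def YSummingConst {E X : Type*} [NormedAddCommGroup E] [NormedSpace ℝ E]
    [NormedAddCommGroup X] [NormedSpace ℝ X]
    (s : SeqLatticeNorm) (S : X → E) : ℝ :=
  sInf {C : ℝ | 0 ≤ C ∧ YSummingWith s S C}

/-!
The point is that the supremum defining the `Π_Y`-norm is dominated by `‖τ(‖·‖_Y)‖`.
Given `x* ∈ B_{X*}` and `a = (⟨x₁,x*⟩,...,⟨xₙ,x*⟩)`, Hahn–Banach gives a linear form `g ≤ ‖·‖_Y`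
on `ℝⁿ` with `g a = ‖a‖_Y`. Since `τ` is a positive linear map, `|τ g| ≤ τ(‖·‖_Y)`, while
`τ g = ∑ g(eⱼ) xⱼ` and `⟨τ g, x*⟩ = g a`. Hence `‖a‖_Y ≤ ‖τ g‖ ≤ ‖τ(‖·‖_Y)‖`.
-/

namespace SeqLatticeNorm

variable (s : SeqLatticeNorm) (n : ℕ)

lemma N_zero : s.N n 0 = 0 := by
  simpa using s.smul_eq n 0 0

lemma N_neg (a : Fin n → ℝ) : s.N n (-a) = s.N n a := by
  simpa using s.smul_eq n (-1) a

lemma N_nonneg (a : Fin n → ℝ) : 0 ≤ s.N n a := by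
  have h := s.add_le n a (-a)
  rw [add_neg_cancel, N_zero, N_neg] at h
  linarith

lemma inHn_N : InHn (s.N n) :=
  ⟨s.cont n, fun l hl t => by rw [s.smul_eq, abs_of_nonneg hl]⟩

lemma exists_linearMap_le_N_eq (a : Fin n → ℝ) :
    ∃ g : (Fin n → ℝ) →ₗ[ℝ] ℝ, (∀ t, g t ≤ s.N n t) ∧ g a = s.N n a := by
  have H : ∀ c : ℝ, c • a = 0 → c • s.N n a = 0 := by
    intro c hc
    rcases smul_eq_zero.1 hc with rfl | rfl
    · exact zero_smul ℝ _
    · rw [N_zero, smul_zero]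
  let f := LinearPMap.mkSpanSingleton' (σ := RingHom.id ℝ) a (s.N n a) H
  have hf : ∀ z : f.domain, f z ≤ s.N n z := by
    rintro ⟨z, hz⟩
    obtain ⟨c, rfl⟩ := Submodule.mem_span_singleton.1 hz
    rw [LinearPMap.mkSpanSingleton'_apply, s.smul_eq, smul_eq_mul]
    exact mul_le_mul_of_nonneg_right (le_abs_self c) (s.N_nonneg n a)
  obtain ⟨g, hgf, hgN⟩ := exists_extension_of_le_sublinear f (s.N n)
    (fun c hc t => by rw [s.smul_eq, abs_of_pos hc]) (s.add_le n) hf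
  have ha : a ∈ f.domain := Submodule.mem_span_singleton_self a
  refine ⟨g, hgN, ?_⟩
  rw [hgf ⟨a, ha⟩]
  exact LinearPMap.mkSpanSingleton'_apply_self a (s.N n a) H ha

end SeqLatticeNorm

lemma InHn.smul {n : ℕ} {h : (Fin n → ℝ) → ℝ} (hh : InHn h) (c : ℝ) : InHn (c • h) := by
  refine ⟨hh.1.const_smul c, fun l hl t => ?_⟩
  simp only [Pi.smul_apply, smul_eq_mul, hh.2 l hl t]
  ring

lemma LinearMap.inHn {n : ℕ} (g : (Fin n → ℝ) →ₗ[ℝ] ℝ) : InHn g :=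
  ⟨g.continuous_of_finiteDimensional, fun l _ t => by rw [map_smul, smul_eq_mul]⟩

namespace IsKrivine

variable {X : Type*} [NormedAddCommGroup X] [Lattice X] [HasSolidNorm X] [IsOrderedAddMonoid X]
  [NormedSpace ℝ X] {n : ℕ} {x : Fin n → X} {τ : ((Fin n → ℝ) → ℝ) → X}

lemma map_zero (hτ : IsKrivine x τ) : τ 0 = 0 := by
  simpa using hτ.2.1 0 0 ⟨continuous_const, fun l _ t => by simp⟩

lemma map_neg (hτ : IsKrivine x τ) {h : (Fin n → ℝ) → ℝ} (hh : InHn h) : τ (-h) = -τ h := by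
  simpa using hτ.2.1 (-1) h hh

lemma map_sum_smul_proj (hτ : IsKrivine x τ) (c : Fin n → ℝ) (u : Finset (Fin n)) :
    τ ⇑(∑ j ∈ u, c j • LinearMap.proj (R := ℝ) (φ := fun _ => ℝ) j) = ∑ j ∈ u, c j • x j := by
  classical
  induction u using Finset.induction with
  | empty => exact hτ.map_zero
  | insert a u ha ih =>
    let p := LinearMap.proj (R := ℝ) (φ := fun _ : Fin n => ℝ) a
    rw [Finset.sum_insert ha, Finset.sum_insert ha, ← ih, ← hτ.2.2.2 a,
      ← hτ.2.1 (c a) (fun t => t a) p.inHn]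
    exact hτ.1 (c a • p) _ (c a • p).inHn (LinearMap.inHn _)

lemma map_linearMap (hτ : IsKrivine x τ) (g : (Fin n → ℝ) →ₗ[ℝ] ℝ) :
    τ g = ∑ j, g (Pi.single j 1) • x j := by
  have hg : g = ∑ j, g (Pi.single j 1) • LinearMap.proj (R := ℝ) (φ := fun _ => ℝ) j := by
    ext j
    simp [Pi.single_apply]
  rw [← hτ.map_sum_smul_proj, ← hg]

lemma mono (hτ : IsKrivine x τ) {h g : (Fin n → ℝ) → ℝ} (hh : InHn h) (hg : InHn g)
    (hle : h ≤ g) : τ h ≤ τ g := by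
  calc τ h ≤ τ h ⊔ τ g := le_sup_left
    _ = τ (h ⊔ g) := (hτ.2.2.1 h g hh hg).symm
    _ = τ g := by rw [sup_eq_right.2 hle]

lemma norm_le_of_abs_le (hτ : IsKrivine x τ) {h g : (Fin n → ℝ) → ℝ} (hh : InHn h) (hg : InHn g)
    (hle : ∀ t, |g t| ≤ h t) : ‖τ g‖ ≤ ‖τ h‖ := by
  have habs : |τ g| ≤ τ h := abs_le'.2
    ⟨hτ.mono hg hh fun t => (le_abs_self _).trans (hle t),
     hτ.map_neg hg ▸ hτ.mono (neg_one_smul ℝ g ▸ hg.smul (-1)) hh fun t => (neg_le_abs _).trans (hle t)⟩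
  exact norm_le_norm_of_abs_le_abs (habs.trans (le_abs_self _))

lemma N_map_le_norm (s : SeqLatticeNorm) (hτ : IsKrivine x τ) (φ : X →L[ℝ] ℝ) (hφ : ‖φ‖ ≤ 1) :
    s.N n (fun j => φ (x j)) ≤ ‖τ (s.N n)‖ := by
  obtain ⟨g, hgN, hga⟩ := s.exists_linearMap_le_N_eq n (fun j => φ (x j))
  have hφτg : φ (τ g) = s.N n (fun j => φ (x j)) := by
    conv_rhs => rw [← hga, pi_eq_sum_univ' fun j => φ (x j)]
    simp [hτ.map_linearMap, mul_comm]
  have hg_abs : ∀ t, |g t| ≤ s.N n t :=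
    fun t => abs_le'.2 ⟨hgN t, by simpa [s.N_neg] using hgN (-t)⟩
  calc s.N n (fun j => φ (x j)) = φ (τ g) := hφτg.symm
    _ ≤ ‖φ (τ g)‖ := Real.le_norm_self _
    _ ≤ ‖τ g‖ := (φ.le_of_opNorm_le hφ _).trans_eq (one_mul _)
    _ ≤ ‖τ (s.N n)‖ := hτ.norm_le_of_abs_le (s.inHn_N n) g.inHn hg_abs

end IsKrivine

lemma YSummingWith.yConcaveWith {E X : Type*} [NormedAddCommGroup E] [NormedSpace ℝ E]
    [NormedAddCommGroup X] [Lattice X] [HasSolidNorm X] [IsOrderedAddMonoid X] [NormedSpace ℝ X]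
    {s : SeqLatticeNorm} {S : X → E} {C : ℝ} (hsum : YSummingWith s S C) (hC : 0 ≤ C) :
    YConcaveWith s S C := by
  intro n x τ hτ
  refine (hsum n x).trans (mul_le_mul_of_nonneg_left ?_ hC)
  refine Real.sSup_le ?_ (norm_nonneg _)
  rintro r ⟨φ, hφ, rfl⟩
  exact IsKrivine.N_map_le_norm s hτ φ hφ

theorem ysumming_yconcave_general {E X : Type*} [NormedAddCommGroup E] [NormedSpace ℝ E]
    [NormedAddCommGroup X] [Lattice X] [HasSolidNorm X] [IsOrderedAddMonoid X] [NormedSpace ℝ X]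
    (s : SeqLatticeNorm) (S : X →ₗ[ℝ] E) (hS : ∃ C > 0, YSummingWith s (⇑S) C) :
    (∃ K > 0, YConcaveWith s (⇑S) K) ∧
    YConcaveConst s (⇑S) ≤ YSummingConst s (⇑S) := by
  obtain ⟨C, hC, hsum⟩ := hS
  refine ⟨⟨C, hC, hsum.yConcaveWith hC.le⟩, ?_⟩
  refine csInf_le_csInf ⟨0, fun K hK => hK.1⟩ ⟨C, hC.le, hsum⟩ ?_
  exact fun C' ⟨hC'_nonneg, hC'_sum⟩ => ⟨hC'_nonneg, hC'_sum.yConcaveWith hC'_nonneg⟩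

/-- Every absolutely `Y`-summing operator `S : X → E` is `Y`-concave, with
`‖S‖_{K_Y} ≤ ‖S‖_{Π_Y}`. -/
theorem ysumming_yconcave {E X : Type*} [NormedAddCommGroup E] [NormedSpace ℝ E]
    [CompleteSpace E] [NormedAddCommGroup X] [Lattice X] [HasSolidNorm X] [IsOrderedAddMonoid X] [NormedSpace ℝ X] [CompleteSpace X]
    (s : SeqLatticeNorm) (S : X →ₗ[ℝ] E) (hS : ∃ C > 0, YSummingWith s (⇑S) C) :
    (∃ K > 0, YConcaveWith s (⇑S) K) ∧
    YConcaveConst s (⇑S) ≤ YSummingConst s (⇑S) :=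
  ysumming_yconcave_general s S hS
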